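/- arXiv:0707.0134 — 3 statements merged into one kernel-verified Lean document; each statement's English description precedes it below -/
import Mathlib

section
/- Let r ≥ 2 be an integer, let G be a graph, and let G' be an r-partite subgraph of G. If m is the number of edges of G incident to at least one vertex of V(G) \ V(G'), then G has an r-partite subgraph with at least e(G') + ((r-1)/r)·m edges. -/
/-!
Fix a proper `r`-coloring of `G'` and color every vertex outside `V(G')` uniformly at random.
An edge with an endpoint `w ∉ V(G')` is then monochromatic with probability exactly `1/r`,
because the color of `w` is independent of the color of the other endpoint. Hence some
extension colors at least `(r-1)/r · m` of these edges properly; keeping the properly colored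
edges of `G` gives an `r`-partite subgraph containing all of `G'` as well.
-/

open SimpleGraph Finset Function

section Extensions

variable {V α : Type*} [Fintype V] [DecidableEq V] [Fintype α] [DecidableEq α]
variable (A : Set V) [DecidablePred (· ∈ A)] (c₀ : V → α)

def extensionsOn : Finset (V → α) :=
  {c | ∀ v ∈ A, c v = c₀ v}

lemma mem_extensionsOn {c : V → α} : c ∈ extensionsOn A c₀ ↔ ∀ v ∈ A, c v = c₀ v :=
  mem_filter.trans (and_iff_right (mem_univ c))

lemma update_mem_extensionsOn {c : V → α} (hc : c ∈ extensionsOn A c₀) {w : V} (hw : w ∉ A)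
    (x : α) : update c w x ∈ extensionsOn A c₀ := by
  rw [mem_extensionsOn] at hc ⊢
  intro v hv
  rw [update_of_ne (by rintro rfl; exact hw hv), hc v hv]

/-- The map `c ↦ update c w (c u)` sends every extension onto one agreeing at `u` and `w`,
and its fibres are the `card α` recolorings of `w`. -/
lemma card_mul_card_filter_eq_eq {u w : V} (huw : u ≠ w) (hw : w ∉ A) :
    Fintype.card α * #{c ∈ extensionsOn A c₀ | c w = c u} = #(extensionsOn A c₀) := by
  have hfibre : ∀ d ∈ {c ∈ extensionsOn A c₀ | c w = c u},
      #{c ∈ extensionsOn A c₀ | update c w (c u) = d} = Fintype.card α := by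
    intro d hd
    rw [mem_filter] at hd
    suffices {c ∈ extensionsOn A c₀ | update c w (c u) = d} = univ.image (update d w) by
      rw [this, card_image_of_injective _ (update_injective d w), card_univ]
    ext c
    simp only [mem_filter, mem_image, mem_univ, true_and]
    constructor
    · rintro ⟨-, rfl⟩
      exact ⟨c w, by simp⟩
    · rintro ⟨x, rfl⟩
      refine ⟨update_mem_extensionsOn A c₀ hd.1 hw x, ?_⟩
      rw [update_of_ne huw, update_idem, ← hd.2, update_eq_self]
  have hmaps : Set.MapsTo (fun c => update c w (c u)) (extensionsOn A c₀ : Set (V → α))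
      ({c ∈ extensionsOn A c₀ | c w = c u} : Finset (V → α)) := by
    intro c hc
    rw [mem_coe, mem_filter]
    exact ⟨update_mem_extensionsOn A c₀ hc hw _, by simp [update_of_ne huw]⟩
  rw [card_eq_sum_card_fiberwise hmaps, sum_congr rfl hfibre, sum_const, smul_eq_mul, mul_comm]

lemma exists_mem_extensionsOn_card_mul_card_filter_isDiag_le (S : Finset (Sym2 V))
    (hS : ∀ e ∈ S, ¬ e.IsDiag ∧ ∃ w ∈ e, w ∉ A) :
    ∃ c ∈ extensionsOn A c₀, Fintype.card α * #{e ∈ S | (e.map c).IsDiag} ≤ #S := by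
  have hedge : ∀ e ∈ S, Fintype.card α * #{c ∈ extensionsOn A c₀ | (e.map c).IsDiag} =
      #(extensionsOn A c₀) := by
    intro e he
    obtain ⟨hdiag, w, hwe, hw⟩ := hS e he
    obtain ⟨u, rfl⟩ := Sym2.mem_iff_exists.1 hwe
    have huw : u ≠ w := fun h => hdiag (Sym2.mk_isDiag_iff.2 h.symm)
    simp only [Sym2.map_mk, Sym2.mk_isDiag_iff]
    exact card_mul_card_filter_eq_eq A c₀ huw hw
  have hdouble : ∑ c ∈ extensionsOn A c₀, Fintype.card α * #{e ∈ S | (e.map c).IsDiag}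
      = ∑ _c ∈ extensionsOn A c₀, #S := by
    rw [← mul_sum, sum_const, smul_eq_mul]
    have := sum_card_bipartiteAbove_eq_sum_card_bipartiteBelow
      (fun (c : V → α) (e : Sym2 V) => (e.map c).IsDiag) (s := extensionsOn A c₀) (t := S)
    simp only [bipartiteAbove, bipartiteBelow] at this
    rw [this, mul_sum, sum_congr rfl hedge, sum_const, smul_eq_mul, mul_comm]
  have hne : (extensionsOn A c₀).Nonempty := ⟨c₀, (mem_extensionsOn A c₀).2 fun _ _ => rfl⟩
  exact exists_le_of_sum_le hne hdouble.le

lemma exists_mem_extensionsOn_card_mul_card_filter_not_isDiag_ge (S : Finset (Sym2 V))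
    (hS : ∀ e ∈ S, ¬ e.IsDiag ∧ ∃ w ∈ e, w ∉ A) :
    ∃ c ∈ extensionsOn A c₀, ((Fintype.card α : ℚ) - 1) * #S ≤
      Fintype.card α * #{e ∈ S | ¬ (e.map c).IsDiag} := by
  obtain ⟨c, hc, hdiag⟩ := exists_mem_extensionsOn_card_mul_card_filter_isDiag_le A c₀ S hS
  refine ⟨c, hc, ?_⟩
  have hsplit : (#{e ∈ S | (e.map c).IsDiag} : ℚ) + #{e ∈ S | ¬ (e.map c).IsDiag} = #S := by
    exact_mod_cast card_filter_add_card_filter_not _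
  have hdiagℚ : (Fintype.card α : ℚ) * #{e ∈ S | (e.map c).IsDiag} ≤ #S := by
    exact_mod_cast hdiag
  linear_combination hdiagℚ - (Fintype.card α : ℚ) * hsplit

end Extensions

namespace SimpleGraph

variable {V α : Type*}

def properlyColoredSubgraph (G : SimpleGraph V) (c : V → α) : G.Subgraph :=
  (⊤ : G.Subgraph).deleteEdges {e | (e.map c).IsDiag}

variable {G : SimpleGraph V} {c : V → α}

@[simp]
lemma properlyColoredSubgraph_adj {u w : V} :
    (G.properlyColoredSubgraph c).Adj u w ↔ G.Adj u w ∧ c u ≠ c w := by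
  simp [properlyColoredSubgraph, Subgraph.deleteEdges_adj]

lemma mem_edgeSet_properlyColoredSubgraph {e : Sym2 V} :
    e ∈ (G.properlyColoredSubgraph c).edgeSet ↔ e ∈ G.edgeSet ∧ ¬ (e.map c).IsDiag := by
  induction e using Sym2.ind
  simp

lemma colorable_properlyColoredSubgraph {r : ℕ} (c : V → Fin r) :
    (G.properlyColoredSubgraph c).coe.Colorable r :=
  ⟨Coloring.mk (fun v => c v) fun h => (properlyColoredSubgraph_adj.1 h).2⟩

lemma ncard_edgeSet_add_card_filter_le_ncard_edgeSet_properlyColoredSubgraph [Finite V]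
    [DecidableEq α] {G' : G.Subgraph} (hc : ∀ ⦃u w⦄, G'.Adj u w → c u ≠ c w)
    (S : Finset (Sym2 V))
    (hS : ∀ e ∈ S, e ∈ G.edgeSet ∧ ∃ v ∈ e, v ∉ G'.verts) :
    G'.edgeSet.ncard + #{e ∈ S | ¬ (e.map c).IsDiag} ≤
      (G.properlyColoredSubgraph c).edgeSet.ncard := by
  set T : Finset (Sym2 V) := {e ∈ S | ¬ (e.map c).IsDiag}
  have hG' : G'.edgeSet ⊆ (G.properlyColoredSubgraph c).edgeSet := by
    intro e he
    induction e using Sym2.ind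
    exact properlyColoredSubgraph_adj.2 ⟨G'.adj_sub he, hc he⟩
  have hT : ↑T ⊆ (G.properlyColoredSubgraph c).edgeSet := by
    intro e he
    rw [mem_coe, mem_filter] at he
    exact mem_edgeSet_properlyColoredSubgraph.2 ⟨(hS e he.1).1, he.2⟩
  have hdisj : Disjoint G'.edgeSet ↑T := by
    rw [Set.disjoint_left]
    intro e he he'
    rw [mem_coe, mem_filter] at he'
    obtain ⟨v, hve, hv⟩ := (hS e he'.1).2
    exact hv (G'.mem_verts_of_mem_edge he hve)
  rw [← Set.ncard_coe_finset, ← Set.ncard_union_eq hdisj]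
  exact Set.ncard_le_ncard (Set.union_subset hG' hT)

end SimpleGraph

/-- If `G'` is an `r`-partite subgraph of `G` and `m` counts the edges of `G`
incident to at least one vertex outside `V(G')`, then `G` has an `r`-partite subgraph with
at least `e(G') + ((r-1)/r)·m` edges. -/
theorem stmt0 {V : Type} [Fintype V] (r : ℕ) (hr : 2 ≤ r)
    (G : SimpleGraph V) (G' : G.Subgraph) (hcol : G'.coe.Colorable r) :
    ∃ H : G.Subgraph, H.coe.Colorable r ∧
      (G'.edgeSet.ncard : ℚ) + ((r : ℚ) - 1) / r *
        ({e ∈ G.edgeSet | ∃ v ∈ e, v ∉ G'.verts}.ncard : ℚ) ≤ (H.edgeSet.ncard : ℚ) := by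
  classical
  obtain ⟨C⟩ := hcol
  have : NeZero r := ⟨by omega⟩
  set M := {e ∈ G.edgeSet | ∃ v ∈ e, v ∉ G'.verts}
  let c₀ : V → Fin r := fun v => if h : v ∈ G'.verts then C ⟨v, h⟩ else 0
  obtain ⟨c, hc, hcount⟩ := exists_mem_extensionsOn_card_mul_card_filter_not_isDiag_ge G'.verts
    c₀ M.toFinset fun e he => by
      rw [Set.mem_toFinset] at he
      exact ⟨G.not_isDiag_of_mem_edgeSet he.1, he.2⟩
  have hcG' : ∀ ⦃u w⦄, G'.Adj u w → c u ≠ c w := by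
    intro u w h
    have hu := G'.edge_vert h
    have hw := G'.edge_vert h.symm
    rw [(mem_extensionsOn _ _).1 hc u hu, (mem_extensionsOn _ _).1 hc w hw]
    simpa [c₀, hu, hw] using C.valid (show G'.coe.Adj ⟨u, hu⟩ ⟨w, hw⟩ from h)
  have hkeep := ncard_edgeSet_add_card_filter_le_ncard_edgeSet_properlyColoredSubgraph hcG'
    M.toFinset fun e he => by rwa [Set.mem_toFinset] at he
  refine ⟨G.properlyColoredSubgraph c, colorable_properlyColoredSubgraph c, ?_⟩
  rw [Fintype.card_fin] at hcount
  have hkeepℚ : (G'.edgeSet.ncard : ℚ) + #{e ∈ M.toFinset | ¬ (e.map c).IsDiag} ≤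
      (G.properlyColoredSubgraph c).edgeSet.ncard := by exact_mod_cast hkeep
  have hfrac : ((r : ℚ) - 1) / r * M.ncard ≤ #{e ∈ M.toFinset | ¬ (e.map c).IsDiag} := by
    rw [Set.ncard_eq_toFinset_card' M, div_mul_eq_mul_div, div_le_iff₀ (by positivity)]
    linarith
  linarith
end

section
/- For any graph F and any positive integer b, the minimum number of edges whose deletion makes the b-blowup F_b of F r-colorable equals b² times the minimum number of edges whose deletion makes F r-colorable. That is, E'_r(F_b) = b²·E'_r(F). -/
open SimpleGraph

/-- `Ecol G r` : the minimum number of edge deletions making `G` `r`-colorable. -/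
noncomputable def Ecol {V : Type} (G : SimpleGraph V) (r : ℕ) : ℕ :=
  sInf {m | ∃ S : Set (Sym2 V), S ⊆ G.edgeSet ∧ S.ncard = m ∧ (G.deleteEdges S).Colorable r}

/-!
Write `n = |α|`. A deletion set `S` for `F` lifts to its preimage under the projection
`F_b → F`, which has `b² |S|` edges and leaves `F_b` `r`-colorable through `F`.
Conversely, every transversal `t : α → Fin b` embeds `F` into `F_b` as an induced subgraph,
so it pulls a deletion set `S'` of `F_b` back to one of `F`. Each edge of `F_b` lies in the
image of exactly `b^(n-2)` of the `b^n` transversals, so on average a transversal pulls back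
`|S'| / b²` edges, and some transversal pulls back at most that many.
-/

open Finset

lemma Nat.sInf_eq_mul_sInf {A B : Set ℕ} {c : ℕ} (hAB : ∀ m ∈ A, c * m ∈ B)
    (hBA : ∀ m ∈ B, ∃ k ∈ A, c * k ≤ m) : sInf B = c * sInf A := by
  rcases B.eq_empty_or_nonempty with rfl | hB
  · have hA : A = ∅ := Set.eq_empty_of_forall_notMem fun m hm => hAB m hm
    simp [hA]
  · obtain ⟨k, hk, hkB⟩ := hBA _ (Nat.sInf_mem hB)
    exact le_antisymm (Nat.sInf_le (hAB _ (Nat.sInf_mem ⟨k, hk⟩)))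
      ((Nat.mul_le_mul_left c (Nat.sInf_le hk)).trans hkB)

lemma Fintype.card_filter_apply_eq_and_apply_eq_mul {α β : Type*} [DecidableEq α] [Fintype α]
    [DecidableEq β] [Fintype β] {u v : α} (huv : u ≠ v) (i j : β) :
    #{t : α → β | t u = i ∧ t v = j} * card β ^ 2 = card β ^ card α := by
  let R := {x : {x // x ≠ u} // x ≠ ⟨v, huv.symm⟩} → β
  let e : (α → β) ≃ β × β × R :=
    (Equiv.funSplitAt u β).trans ((Equiv.refl β).prodCongr (Equiv.funSplitAt _ β))
  have hfiber : #{t : α → β | t u = i ∧ t v = j} = #({i} ×ˢ {j} ×ˢ (univ : Finset R)) :=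
    Finset.card_equiv e fun t => by
      simp [e, Equiv.funSplitAt, Equiv.piSplitAt, eq_comm, and_comm]
  rw [hfiber, ← card_fun, card_congr e]
  simp only [card_product, card_singleton, card_univ, card_prod]
  ring

lemma Sym2.ncard_preimage_map_of_leftInverse {V W : Type*} {f : V → W} {g : W → V}
    (hgf : Function.LeftInverse g f) (S : Set (Sym2 W)) :
    (Sym2.map f ⁻¹' S).ncard = {e ∈ S | (e.map g).map f = e}.ncard := by
  have hpre : Sym2.map f ⁻¹' S = Sym2.map f ⁻¹' {e ∈ S | (e.map g).map f = e} := by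
    have hfgf : (f ∘ g) ∘ f = f := by rw [Function.comp_assoc, hgf.id, Function.comp_id]
    ext e
    simp only [Set.mem_preimage, Set.mem_sep_iff, Sym2.map_map, hfgf, and_true]
  rw [hpre, Set.ncard_preimage_of_injective_subset_range (Sym2.map.injective hgf.injective)]
  exact fun e he => ⟨e.map g, he.2⟩

namespace SimpleGraph

variable {V W : Type*}

lemma edgeSet_comap (f : V → W) (H : SimpleGraph W) :
    (H.comap f).edgeSet = Sym2.map f ⁻¹' H.edgeSet := by
  ext e
  induction e with
  | _ x y => simp

lemma preimage_subset_edgeSet_comap (f : V → W) {H : SimpleGraph W} {S : Set (Sym2 W)}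
    (hS : S ⊆ H.edgeSet) : Sym2.map f ⁻¹' S ⊆ (H.comap f).edgeSet := by
  rw [edgeSet_comap]
  exact Set.preimage_mono hS

lemma comap_deleteEdges (f : V → W) (H : SimpleGraph W) (S : Set (Sym2 W)) :
    (H.deleteEdges S).comap f = (H.comap f).deleteEdges (Sym2.map f ⁻¹' S) := by
  ext
  simp

lemma Colorable.comap_deleteEdges {H : SimpleGraph W} {S : Set (Sym2 W)} {r : ℕ}
    (hc : (H.deleteEdges S).Colorable r) (f : V → W) :
    ((H.comap f).deleteEdges (Sym2.map f ⁻¹' S)).Colorable r := by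
  rw [← SimpleGraph.comap_deleteEdges]
  exact hc.of_hom (Hom.comap f _)

abbrev blowup (F : SimpleGraph V) (β : Type*) : SimpleGraph (V × β) := F.comap Prod.fst

variable {β : Type*}

lemma comap_blowup_section (F : SimpleGraph V) (t : V → β) :
    (F.blowup β).comap (fun u => (u, t u)) = F := by
  ext
  simp

variable [Fintype V] [Fintype β]

lemma card_sections_through_edge_mul [DecidableEq V] [DecidableEq β] {F : SimpleGraph V}
    {e : Sym2 (V × β)} (he : e ∈ (F.blowup β).edgeSet) :
    #{t : V → β | (e.map Prod.fst).map (fun u => (u, t u)) = e} * Fintype.card β ^ 2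
      = Fintype.card β ^ Fintype.card V := by
  induction e with
  | _ x y =>
    have hne : x.1 ≠ y.1 := (F.comap_adj.1 he).ne
    convert Fintype.card_filter_apply_eq_and_apply_eq_mul hne x.2 y.2 using 4 with t
    simp [Prod.ext_iff, hne]

lemma sum_ncard_preimage_section_mul [DecidableEq V] {F : SimpleGraph V}
    {S : Set (Sym2 (V × β))} (hS : S ⊆ (F.blowup β).edgeSet) :
    ∑ t : V → β, (Sym2.map (fun u => (u, t u)) ⁻¹' S).ncard * Fintype.card β ^ 2
      = S.ncard * Fintype.card β ^ Fintype.card V := by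
  classical
  have hsection (t : V → β) : (Sym2.map (fun u => (u, t u)) ⁻¹' S).ncard
      = #{e ∈ S.toFinset | (e.map Prod.fst).map (fun u => (u, t u)) = e} := by
    rw [Sym2.ncard_preimage_map_of_leftInverse (g := Prod.fst) (fun _ => rfl),
      ← Set.ncard_coe_finset, coe_filter]
    simp only [Set.mem_toFinset]
  have hswap : ∑ t : V → β, #{e ∈ S.toFinset | (e.map Prod.fst).map (fun u => (u, t u)) = e}
      = ∑ e ∈ S.toFinset, #{t : V → β | (e.map Prod.fst).map (fun u => (u, t u)) = e} :=
    sum_card_bipartiteAbove_eq_sum_card_bipartiteBelow _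
  simp_rw [hsection, ← sum_mul, hswap, sum_mul]
  rw [sum_congr rfl fun e he => card_sections_through_edge_mul (hS (Set.mem_toFinset.1 he)),
    sum_const, smul_eq_mul, Set.ncard_eq_toFinset_card']

variable [Nonempty β]

lemma exists_ncard_preimage_section_mul_le {F : SimpleGraph V} {S : Set (Sym2 (V × β))}
    (hS : S ⊆ (F.blowup β).edgeSet) :
    ∃ t : V → β,
      (Sym2.map (fun u => (u, t u)) ⁻¹' S).ncard * Fintype.card β ^ 2 ≤ S.ncard := by
  classical
  obtain ⟨t, -, ht⟩ := exists_le_of_sum_le univ_nonempty (g := fun _ => S.ncard) <| by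
    rw [sum_ncard_preimage_section_mul hS, sum_const, card_univ, Fintype.card_fun, smul_eq_mul,
      mul_comm]
  exact ⟨t, ht⟩

lemma ncard_preimage_map_fst {F : SimpleGraph V} {S : Set (Sym2 V)} (hS : S ⊆ F.edgeSet) :
    (Sym2.map (Prod.fst : V × β → V) ⁻¹' S).ncard = Fintype.card β ^ 2 * S.ncard := by
  classical
  have hsection (t : V → β) :
      Sym2.map (fun u => (u, t u)) ⁻¹' (Sym2.map (Prod.fst : V × β → V) ⁻¹' S) = S := by
    ext e
    simp [Sym2.map_map]
  have key :=
    sum_ncard_preimage_section_mul (preimage_subset_edgeSet_comap (Prod.fst : V × β → V) hS)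
  simp only [hsection, sum_const, card_univ, Fintype.card_fun, smul_eq_mul] at key
  refine Nat.eq_of_mul_eq_mul_left (pow_pos (Fintype.card_pos (α := β)) (Fintype.card V)) ?_
  linarith

end SimpleGraph

/-- `E'_r(F_b) = b² · E'_r(F)`, where the `b`-blowup of `F` is modelled as
the comap of `F` along the projection `α × Fin b → α`. -/
theorem stmt2 {α : Type} [Fintype α] (F : SimpleGraph α) (r b : ℕ) (hb : 0 < b) :
    Ecol (F.comap (Prod.fst : α × Fin b → α)) r = b ^ 2 * Ecol F r := by
  have : Nonempty (Fin b) := ⟨⟨0, hb⟩⟩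
  refine Nat.sInf_eq_mul_sInf ?_ ?_
  · rintro _ ⟨S, hS, rfl, hc⟩
    exact ⟨_, preimage_subset_edgeSet_comap _ hS, by simp [ncard_preimage_map_fst hS],
      hc.comap_deleteEdges _⟩
  · rintro _ ⟨S, hS, rfl, hc⟩
    obtain ⟨t, ht⟩ := exists_ncard_preimage_section_mul_le hS
    have hF := comap_blowup_section F t
    refine ⟨_, ⟨_, ?_, rfl, ?_⟩, by simpa [mul_comm] using ht⟩
    · simpa only [hF] using preimage_subset_edgeSet_comap (fun u => (u, t u)) hS
    · simpa only [hF] using hc.comap_deleteEdges (fun u => (u, t u))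
end

section
/- If F is a graph and b a positive integer, then for every set S of edges whose removal makes the b-blowup F_b r-colorable we have |S| ≥ b²·E'_r(F). In particular, selecting one vertex from each blowup class yields a copy of F spanning at least E'_r(F) edges of S. -/
/-!
Every transversal `g : α → Fin b` of the blowup spans a copy of `F`, and pulling back an
`r`-coloring of `F_b - S` along that copy shows that `S` meets it in at least `E'_r(F)` edges.
Averaging over all `b ^ |α|` transversals then gives the bound on `|S|`: an edge of `F_b` joins
two distinct classes, so it lies in exactly `b ^ (|α| - 2)` of the copies.
-/

open SimpleGraph

section Copies

variable {V : Type} {W : Type*} {G : SimpleGraph V} {H : SimpleGraph W} {r : ℕ}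
  {S : Set (Sym2 W)}

theorem Ecol_le_ncard_of_hom (f : G →g H) (hS : (H.deleteEdges S).Colorable r) :
    Ecol G r ≤ {e ∈ G.edgeSet | e.map f ∈ S}.ncard := by
  obtain ⟨C⟩ := hS
  refine Nat.sInf_le ⟨_, fun e he => he.1, rfl, ⟨C.comp ⟨f, fun {u v} huv => ?_⟩⟩⟩
  rw [deleteEdges_adj] at huv ⊢
  exact ⟨f.map_adj huv.1, fun he => huv.2 ⟨huv.1, he⟩⟩

theorem Ecol_le_ncard_of_injective (f : G →g H) (hf : Function.Injective f)
    (hS : (H.deleteEdges S).Colorable r) :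
    Ecol G r ≤ {e ∈ S | ∃ u v, G.Adj u v ∧ e = s(f u, f v)}.ncard := by
  have hcopy : {e ∈ S | ∃ u v, G.Adj u v ∧ e = s(f u, f v)} =
      Sym2.map f '' {e ∈ G.edgeSet | e.map f ∈ S} := by
    ext e
    constructor
    · rintro ⟨he, u, v, huv, rfl⟩
      exact ⟨s(u, v), ⟨huv, he⟩, rfl⟩
    · rintro ⟨e, ⟨he, hfe⟩, rfl⟩
      induction e using Sym2.inductionOn with
      | hf u v => exact ⟨hfe, u, v, he, rfl⟩
  rw [hcopy, Set.ncard_image_of_injective _ (Sym2.map.injective hf)]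
  exact Ecol_le_ncard_of_hom f hS

end Copies

theorem mul_le_ncard_of_forall_le_ncard {ι κ : Type*} [Finite ι] [Nonempty ι] [Finite κ]
    {t : Set κ} (R : ι → κ → Prop) {m c : ℕ} (hm : ∀ i, m ≤ {x ∈ t | R i x}.ncard)
    (hc : ∀ x ∈ t, c * {i | R i x}.ncard ≤ Nat.card ι) : c * m ≤ t.ncard := by
  classical
  have := Fintype.ofFinite ι
  have := Fintype.ofFinite κ
  have hswap : ∑ i, {x ∈ t | R i x}.ncard = ∑ x ∈ t.toFinset, {i | R i x}.ncard := by
    simp only [Set.ncard_eq_toFinset_card']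
    convert Finset.sum_card_bipartiteAbove_eq_sum_card_bipartiteBelow (s := .univ)
      (t := t.toFinset) (r := R) using 3 <;> ext <;>
      simp [Finset.bipartiteAbove, Finset.bipartiteBelow]
  refine Nat.le_of_mul_le_mul_left ?_ (Nat.card_pos (α := ι))
  calc Nat.card ι * (c * m) = c * ∑ _i : ι, m := by
        rw [Finset.sum_const, Finset.card_univ, smul_eq_mul, Nat.card_eq_fintype_card]; ring
    _ ≤ c * ∑ i, {x ∈ t | R i x}.ncard := by gcongr with i; exact hm i
    _ = ∑ x ∈ t.toFinset, c * {i | R i x}.ncard := by rw [hswap, Finset.mul_sum]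
    _ ≤ ∑ _x ∈ t.toFinset, Nat.card ι := Finset.sum_le_sum fun x hx => hc x (by simpa using hx)
    _ = Nat.card ι * t.ncard := by
        rw [Finset.sum_const, smul_eq_mul, Set.ncard_eq_toFinset_card', mul_comm]

open Function in
theorem card_sq_mul_ncard_fun_eq_eq {α β : Type*} [Finite α] [Finite β] {u v : α} (huv : u ≠ v)
    (i j : β) : Nat.card β ^ 2 * {g : α → β | g u = i ∧ g v = j}.ncard = Nat.card (α → β) := by
  classical
  let reassign : {g : α → β // g u = i ∧ g v = j} × β × β ≃ (α → β) :=
    { toFun := fun p => update (update p.1.1 u p.2.1) v p.2.2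
      invFun := fun g => (⟨update (update g u i) v j, by simp [huv]⟩, g u, g v)
      left_inv := by
        rintro ⟨⟨g, hu, hv⟩, a, c⟩
        refine Prod.ext (Subtype.ext (funext fun x => ?_)) (by simp [huv])
        by_cases hxv : x = v <;> by_cases hxu : x = u <;> simp_all
      right_inv := by
        intro g
        ext x
        by_cases hxv : x = v <;> by_cases hxu : x = u <;> simp_all }
  rw [← Nat.card_congr reassign, Nat.card_prod, Nat.card_prod, sq, mul_comm]
  rfl

theorem apply_eq_of_sym2_eq_mk_graph {α β : Type*} {g : α → β} {p q : α × β} {u v : α}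
    (h : s(p, q) = s((u, g u), (v, g v))) : g p.1 = p.2 ∧ g q.1 = q.2 := by
  rw [Sym2.eq_iff] at h
  rcases h with ⟨rfl, rfl⟩ | ⟨rfl, rfl⟩ <;> simp

/-- any edge set `S` whose removal makes the `b`-blowup of `F` `r`-colorable has
`|S| ≥ b²·E'_r(F)`; moreover every choice of one vertex per blowup class yields a copy of `F`
spanning at least `E'_r(F)` edges of `S`. -/
theorem stmt3 {α : Type} [Fintype α] (F : SimpleGraph α) (r b : ℕ) (hb : 0 < b)
    (S : Set (Sym2 (α × Fin b)))
    (hsub : S ⊆ (F.comap (Prod.fst : α × Fin b → α)).edgeSet)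
    (hcol : ((F.comap (Prod.fst : α × Fin b → α)).deleteEdges S).Colorable r) :
    b ^ 2 * Ecol F r ≤ S.ncard ∧
      ∀ g : α → Fin b,
        Ecol F r ≤ {e ∈ S | ∃ u v : α, F.Adj u v ∧ e = s((u, g u), (v, g v))}.ncard := by
  have hcopy : ∀ g : α → Fin b,
      Ecol F r ≤ {e ∈ S | ∃ u v : α, F.Adj u v ∧ e = s((u, g u), (v, g v))}.ncard := fun g =>
    Ecol_le_ncard_of_injective (H := F.comap Prod.fst) ⟨fun v => (v, g v), id⟩
      (fun _ _ h => congrArg Prod.fst h) hcol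
  have : Nonempty (α → Fin b) := ⟨fun _ => ⟨0, hb⟩⟩
  refine ⟨mul_le_ncard_of_forall_le_ncard _ hcopy ?_, hcopy⟩
  rintro ⟨p, q⟩ he
  calc b ^ 2 * {g : α → Fin b | ∃ u v, F.Adj u v ∧ s(p, q) = s((u, g u), (v, g v))}.ncard
      ≤ Nat.card (Fin b) ^ 2 * {g : α → Fin b | g p.1 = p.2 ∧ g q.1 = q.2}.ncard := by
        rw [Nat.card_fin]
        exact Nat.mul_le_mul_left _ <| Set.ncard_le_ncard
          (fun g ⟨_, _, _, h⟩ => apply_eq_of_sym2_eq_mk_graph h)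
    _ = Nat.card (α → Fin b) := card_sq_mul_ncard_fun_eq_eq (hsub he).ne _ _
end
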